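/- Let a unit-speed, bi-Lipschitz embedding γ ∈ H²(𝕋¹; ℝ³) be given and suppose (x₀,y₀) is a distortion-realizing pair, i.e. ϑ(x₀-y₀)/|γ(x₀)-γ(y₀)| = δ_∞(γ) with ϑ(x₀-y₀) > 0. Then ϑ(x₀-y₀) ≥ (1/4)·((δ_∞(γ)-1)/(δ_∞(γ)+1))²·‖γ''‖⁻²_{L²(𝕋¹)}. -/

import Mathlib

/-! For a unit-speed curve, Cauchy–Schwarz gives `‖γ' x - γ' b‖² ≤ (b - x) Q` with
`Q = ∫ₐᵇ ‖γ''‖²`, i.e. `⟪γ' b, γ' x⟫ ≥ 1 - (b - x) Q / 2` on `[a, b]`; integrating in `x` bounds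
the chord from below: `‖γ b - γ a‖ ≥ (b - a) - (b - a)² Q / 4`. On the shorter arc from `y₀` to
`x₀`, of length `t = ϑ(x₀ - y₀) ≤ π`, the chord is `t / δ`, so `δ - 1 ≤ δ t Q / 4`, and by
periodicity `Q ≤ 2π ‖γ''‖²_{L²}`. The stated bound is weaker than this, as `π ≤ 4` and
`(δ - 1)/(δ + 1) ≤ 1`. -/

open MeasureTheory Real
open scoped RealInnerProductSpace

/-- Geodesic distance on the torus `𝕋¹ = [-π,π]` with endpoints identified. -/
noncomputable def vartheta (z : ℝ) : ℝ :=
  |z - 2 * π * ((round (z / (2 * π)) : ℤ) : ℝ)|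

lemma sq_intervalIntegral_le_mul {f : ℝ → ℝ} {a b : ℝ} (hab : a ≤ b)
    (hf : IntervalIntegrable f volume a b)
    (hf2 : IntervalIntegrable (fun x => f x ^ 2) volume a b) :
    (∫ x in a..b, f x) ^ 2 ≤ (b - a) * ∫ x in a..b, f x ^ 2 := by
  rcases hab.eq_or_lt with rfl | hlt
  · simp
  -- expand `0 ≤ ∫ (f - c)²` at the mean value `c`
  set c : ℝ := (∫ x in a..b, f x) / (b - a) with hc
  have hvar : 0 ≤ ∫ x in a..b, (f x - c) ^ 2 :=
    intervalIntegral.integral_nonneg hab fun x _ => sq_nonneg _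
  have hexpand : ∫ x in a..b, (f x - c) ^ 2
      = (∫ x in a..b, f x ^ 2) - 2 * c * (∫ x in a..b, f x) + (b - a) * c ^ 2 := by
    have hpoint : ∀ x, (f x - c) ^ 2 = f x ^ 2 - 2 * c * f x + c ^ 2 := fun x => by ring
    simp_rw [hpoint]
    rw [intervalIntegral.integral_add (hf2.sub (hf.const_mul (2 * c))) intervalIntegrable_const,
      intervalIntegral.integral_sub hf2 (hf.const_mul (2 * c)),
      intervalIntegral.integral_const_mul, intervalIntegral.integral_const, smul_eq_mul]
  have hmean : c * (b - a) = ∫ x in a..b, f x := div_mul_cancel₀ _ (sub_pos.2 hlt).ne'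
  nlinarith

lemma Function.Periodic.intervalIntegral_le_of_sub_le_period {f : ℝ → ℝ} {T a b c : ℝ}
    (hf : Function.Periodic f T) (hT : 0 < T) (hf0 : ∀ x, 0 ≤ f x)
    (hint : IntervalIntegrable f volume c (c + T)) (hab : a ≤ b) (hbaT : b - a ≤ T) :
    ∫ x in a..b, f x ≤ ∫ x in c..c + T, f x := by
  rw [← hf.intervalIntegral_add_eq a c]
  exact intervalIntegral.integral_mono_interval le_rfl hab (by linarith)
    (Filter.Eventually.of_forall hf0) (hf.intervalIntegrable hT.ne' hint _ _)

lemma vartheta_le_pi (z : ℝ) : vartheta z ≤ π := by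
  have hround := abs_sub_round (z / (2 * π))
  have hscale : z - 2 * π * (round (z / (2 * π)) : ℝ)
      = 2 * π * (z / (2 * π) - round (z / (2 * π))) := by
    field_simp
  rw [vartheta, hscale, abs_mul, abs_of_pos two_pi_pos]
  nlinarith [pi_pos]

lemma Function.Periodic.exists_norm_sub_eq_vartheta {F : Type*} [SeminormedAddCommGroup F]
    {γ : ℝ → F} (hγ : Function.Periodic γ (2 * π)) (x y : ℝ) :
    ∃ a b, a ≤ b ∧ b - a = vartheta (x - y) ∧ ‖γ x - γ y‖ = ‖γ b - γ a‖ := by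
  set s := x - y - 2 * π * (round ((x - y) / (2 * π)) : ℝ)
  have hs : vartheta (x - y) = |s| := rfl
  have hx : γ x = γ (y + s) := by
    rw [show x = y + s + (round ((x - y) / (2 * π)) : ℤ) * (2 * π) by ring]
    exact hγ.int_mul _ _
  rcases le_total 0 s with h | h
  · exact ⟨y, y + s, by linarith, by rw [hs, abs_of_nonneg h]; ring, by rw [hx]⟩
  · exact ⟨y + s, y, by linarith, by rw [hs, abs_of_nonpos h]; ring, by rw [hx, norm_sub_rev]⟩

lemma MeasureTheory.MemLp.intervalIntegrable_sq_norm {F : Type*} [NormedAddCommGroup F]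
    {g : ℝ → F} {a b : ℝ} (hab : a ≤ b) (hg : MemLp g 2 (volume.restrict (Set.Ioc a b))) :
    IntervalIntegrable (fun x => ‖g x‖ ^ 2) volume a b :=
  (intervalIntegrable_iff_integrableOn_Ioc_of_le hab).2
    ((memLp_two_iff_integrable_sq_norm hg.aestronglyMeasurable).1 hg)

section UnitSpeed

variable {E : Type*} [NormedAddCommGroup E] [InnerProductSpace ℝ E]
  {γ γ' γ'' : ℝ → E} {a b : ℝ}

lemma norm_sub_le_sub_of_norm_deriv_eq_one (hFTC : ∀ x y, γ y - γ x = ∫ t in x..y, γ' t)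
    (hspeed : ∀ x, ‖γ' x‖ = 1) (hab : a ≤ b) : ‖γ b - γ a‖ ≤ b - a := by
  rw [hFTC]
  calc ‖∫ t in a..b, γ' t‖ ≤ ∫ t in a..b, ‖γ' t‖ :=
        intervalIntegral.norm_integral_le_integral_norm hab
    _ = b - a := by simp [hspeed]

lemma sq_norm_sub_le_mul_integral (hInt'' : ∀ x y, IntervalIntegrable γ'' volume x y)
    (hsq : ∀ x y, IntervalIntegrable (fun t => ‖γ'' t‖ ^ 2) volume x y)
    (hFTC' : ∀ x y, γ' y - γ' x = ∫ t in x..y, γ'' t) (hab : a ≤ b) :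
    ‖γ' b - γ' a‖ ^ 2 ≤ (b - a) * ∫ t in a..b, ‖γ'' t‖ ^ 2 := by
  have hnorm : ‖γ' b - γ' a‖ ≤ ∫ t in a..b, ‖γ'' t‖ := by
    rw [hFTC']
    exact intervalIntegral.norm_integral_le_integral_norm hab
  calc ‖γ' b - γ' a‖ ^ 2 ≤ (∫ t in a..b, ‖γ'' t‖) ^ 2 := by gcongr
    _ ≤ (b - a) * ∫ t in a..b, ‖γ'' t‖ ^ 2 :=
        sq_intervalIntegral_le_mul hab (hInt'' a b).norm (hsq a b)

lemma sub_sub_sq_mul_integral_le_norm_sub [CompleteSpace E]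
    (hInt' : ∀ x y, IntervalIntegrable γ' volume x y)
    (hInt'' : ∀ x y, IntervalIntegrable γ'' volume x y)
    (hsq : ∀ x y, IntervalIntegrable (fun t => ‖γ'' t‖ ^ 2) volume x y)
    (hFTC : ∀ x y, γ y - γ x = ∫ t in x..y, γ' t)
    (hFTC' : ∀ x y, γ' y - γ' x = ∫ t in x..y, γ'' t)
    (hspeed : ∀ x, ‖γ' x‖ = 1) (hab : a ≤ b) :
    (b - a) - (b - a) ^ 2 * (∫ t in a..b, ‖γ'' t‖ ^ 2) / 4 ≤ ‖γ b - γ a‖ := by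
  set Q := ∫ t in a..b, ‖γ'' t‖ ^ 2
  have htangent : ∀ x ∈ Set.Icc a b, 1 - (b - x) * Q / 2 ≤ ⟪γ' b, γ' x⟫ := by
    rintro x ⟨hax, hxb⟩
    have hdiff := sq_norm_sub_le_mul_integral hInt'' hsq hFTC' hxb
    have hsub : ∫ t in x..b, ‖γ'' t‖ ^ 2 ≤ Q :=
      intervalIntegral.integral_mono_interval hax hxb le_rfl
        (Filter.Eventually.of_forall fun _ => sq_nonneg _) (hsq a b)
    have hpolar := norm_sub_sq_real (γ' b) (γ' x)
    rw [hspeed, hspeed] at hpolar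
    nlinarith
  have hchord : ∫ x in a..b, ⟪γ' b, γ' x⟫ = ⟪γ' b, γ b - γ a⟫ := by
    rw [hFTC, intervalIntegral.integral_of_le hab, intervalIntegral.integral_of_le hab]
    exact integral_inner ((intervalIntegrable_iff_integrableOn_Ioc_of_le hab).1 (hInt' a b)) _
  have hlinear : ∫ x in a..b, (1 - (b - x) * Q / 2) = (b - a) - (b - a) ^ 2 * Q / 4 := by
    rw [intervalIntegral.integral_sub intervalIntegrable_const
      ((by fun_prop : Continuous fun x : ℝ => (b - x) * Q / 2).intervalIntegrable _ _)]
    simp [intervalIntegral.integral_div, intervalIntegral.integral_mul_const,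
      intervalIntegral.integral_comp_sub_left (fun x => x)]
    ring
  calc (b - a) - (b - a) ^ 2 * Q / 4 = ∫ x in a..b, (1 - (b - x) * Q / 2) := hlinear.symm
    _ ≤ ∫ x in a..b, ⟪γ' b, γ' x⟫ :=
        intervalIntegral.integral_mono_on hab ((by fun_prop : Continuous _).intervalIntegrable _ _)
          ((intervalIntegrable_iff_integrableOn_Ioc_of_le hab).2
            (((intervalIntegrable_iff_integrableOn_Ioc_of_le hab).1 (hInt' a b)).const_inner _))
          htangent
    _ = ⟪γ' b, γ b - γ a⟫ := hchord
    _ ≤ ‖γ' b‖ * ‖γ b - γ a‖ := real_inner_le_norm _ _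
    _ = ‖γ b - γ a‖ := by rw [hspeed, one_mul]

end UnitSpeed

lemma quarter_mul_sq_div_le {δ q : ℝ} (hδ : 1 ≤ δ) (h : δ - 1 ≤ 2 * δ * q) :
    1 / 4 * ((δ - 1) / (δ + 1)) ^ 2 ≤ q := by
  calc 1 / 4 * ((δ - 1) / (δ + 1)) ^ 2 ≤ (δ - 1) / (2 * δ) := by
        rw [div_pow, mul_div_assoc', div_le_div_iff₀ (by positivity) (by linarith)]
        nlinarith
    _ ≤ q := by rw [div_le_iff₀ (by linarith)]; linarith

lemma quarter_mul_sq_div_le_of_chord_bound {δ t d Q E : ℝ} (ht : 0 < t) (hd0 : 0 ≤ d)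
    (htd : t = δ * d) (hdt : d ≤ t) (hlower : t - t ^ 2 * Q / 4 ≤ d) (hQE : Q ≤ 2 * π * E)
    (hE : 0 ≤ E) : 1 / 4 * ((δ - 1) / (δ + 1)) ^ 2 / E ≤ t := by
  have hd : 0 < d := hd0.lt_of_ne fun h => by rw [← h, mul_zero] at htd; linarith
  have hδ : 1 ≤ δ := by nlinarith
  have hδQ : (δ - 1) * t ≤ δ * t * Q / 4 * t := by
    nlinarith [mul_le_mul_of_nonneg_left hlower (by linarith : (0 : ℝ) ≤ δ)]
  have hQ8 : δ * t * Q ≤ δ * t * (8 * E) :=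
    mul_le_mul_of_nonneg_left (hQE.trans (by nlinarith [pi_le_four])) (by positivity)
  rcases hE.eq_or_lt with hE | hE
  · rw [← hE, div_zero]; exact ht.le
  · rw [div_le_iff₀ hE]
    exact quarter_mul_sq_div_le hδ (by linarith [le_of_mul_le_mul_right hδQ ht])

theorem stmt18_general (γ γ' γ'' : ℝ → EuclideanSpace ℝ (Fin 3)) (δ x₀ y₀ : ℝ)
    (hper : Function.Periodic γ (2 * π))
    (hper'' : Function.Periodic γ'' (2 * π))
    (hInt' : ∀ a b : ℝ, IntervalIntegrable γ' volume a b)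
    (hInt'' : ∀ a b : ℝ, IntervalIntegrable γ'' volume a b)
    (hFTC : ∀ a b : ℝ, γ b - γ a = ∫ x in a..b, γ' x)
    (hFTC' : ∀ a b : ℝ, γ' b - γ' a = ∫ x in a..b, γ'' x)
    (hL2 : MemLp γ'' 2 (volume.restrict (Set.Ioc (-π) π)))
    (hspeed : ∀ x, ‖γ' x‖ = 1)
    (hreal : vartheta (x₀ - y₀) = δ * ‖γ x₀ - γ y₀‖)
    (hpos : 0 < vartheta (x₀ - y₀)) :
    (1 / 4) * ((δ - 1) / (δ + 1)) ^ 2 /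
        Real.sqrt ((1 / (2 * π)) * ∫ x in (-π)..π, ‖γ'' x‖ ^ 2) ^ 2 ≤
      vartheta (x₀ - y₀) := by
  obtain ⟨a, b, hab, hba, hchord⟩ := hper.exists_norm_sub_eq_vartheta x₀ y₀
  have hper_sq : Function.Periodic (fun x => ‖γ'' x‖ ^ 2) (2 * π) := fun x => by
    simp only [hper'' x]
  have hperiod : IntervalIntegrable (fun x => ‖γ'' x‖ ^ 2) volume (-π) (-π + 2 * π) := by
    rw [show -π + 2 * π = π by ring]
    exact hL2.intervalIntegrable_sq_norm (by linarith [pi_pos])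
  have hQ : ∫ x in a..b, ‖γ'' x‖ ^ 2 ≤ 2 * π * (1 / (2 * π) * ∫ x in (-π)..π, ‖γ'' x‖ ^ 2) := by
    rw [← mul_assoc, mul_one_div_cancel two_pi_pos.ne', one_mul]
    simpa only [show -π + 2 * π = π by ring] using
      hper_sq.intervalIntegral_le_of_sub_le_period two_pi_pos (fun _ => sq_nonneg _) hperiod hab
        (by linarith [vartheta_le_pi (x₀ - y₀), pi_pos])
  have hsq := hper_sq.intervalIntegrable two_pi_pos.ne' hperiod
  have hlower := sub_sub_sq_mul_integral_le_norm_sub hInt' hInt'' hsq hFTC hFTC' hspeed hab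
  have hupper := norm_sub_le_sub_of_norm_deriv_eq_one hFTC hspeed hab
  rw [hba, ← hchord] at hlower hupper
  have hE : 0 ≤ 1 / (2 * π) * ∫ x in (-π)..π, ‖γ'' x‖ ^ 2 := mul_nonneg (by positivity)
    (intervalIntegral.integral_nonneg (by linarith [pi_pos]) fun _ _ => sq_nonneg _)
  rw [sq_sqrt hE]
  exact quarter_mul_sq_div_le_of_chord_bound hpos (norm_nonneg _) hreal hupper hlower hQ hE

/-- Let `γ ∈ H²(𝕋¹;ℝ³)` be a unit-speed bi-Lipschitz embedding with distortion
`δ_∞(γ) = δ` (so `ϑ(x-y) ≤ δ|γ(x)-γ(y)|` for all `x,y`), and let `(x₀,y₀)` be a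
distortion-realizing pair, i.e. `ϑ(x₀-y₀) = δ·|γ(x₀)-γ(y₀)|` with `ϑ(x₀-y₀) > 0`.
Then `ϑ(x₀-y₀) ≥ (1/4)((δ-1)/(δ+1))²·‖γ''‖_{L²}^{-2}`. -/
theorem stmt18 (γ γ' γ'' : ℝ → EuclideanSpace ℝ (Fin 3)) (δ x₀ y₀ : ℝ)
    (hper : Function.Periodic γ (2 * π))
    (hper' : Function.Periodic γ' (2 * π))
    (hper'' : Function.Periodic γ'' (2 * π))
    (hInt' : ∀ a b : ℝ, IntervalIntegrable γ' volume a b)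
    (hInt'' : ∀ a b : ℝ, IntervalIntegrable γ'' volume a b)
    (hFTC : ∀ a b : ℝ, γ b - γ a = ∫ x in a..b, γ' x)
    (hFTC' : ∀ a b : ℝ, γ' b - γ' a = ∫ x in a..b, γ'' x)
    (hL2 : MemLp γ'' 2 (volume.restrict (Set.Ioc (-π) π)))
    (hspeed : ∀ x, ‖γ' x‖ = 1)
    (hδ : 0 < δ)
    (hsup : ∀ x y : ℝ, vartheta (x - y) ≤ δ * ‖γ x - γ y‖)
    (hreal : vartheta (x₀ - y₀) = δ * ‖γ x₀ - γ y₀‖)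
    (hpos : 0 < vartheta (x₀ - y₀)) :
    (1 / 4) * ((δ - 1) / (δ + 1)) ^ 2 /
        Real.sqrt ((1 / (2 * π)) * ∫ x in (-π)..π, ‖γ'' x‖ ^ 2) ^ 2 ≤
      vartheta (x₀ - y₀) :=
  stmt18_general γ γ' γ'' δ x₀ y₀ hper hper'' hInt' hInt'' hFTC hFTC' hL2 hspeed hreal hpos
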